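/- Adaptive regenerating codes are correct (correctness part of Theorem 3): Let k, g be positive integers and M a positive real. Let t_0,…,t_{g−1} and d_0,…,d_{g−1} be integers with t_i ≥ 1 and d_i ≥ k for all i, and set β_i = β′_i = M/(k(d_i − k + t_i)). Then for every sequence u_0,…,u_{g−1} of integers with 1 ≤ u_i ≤ t_i for all i and ∑_{i<g} u_i = k, writing S_i = ∑_{j<i} u_j, one has ∑_{i<g} u_i · min(M/k, (d_i − S_i)·β_i + (t_i − u_i)·β′_i) ≥ M. -/

import Mathlib

/-! Every minimum in the flow bound equals `M / k`, so stage `i` contributes exactly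
`u_i · M / k`, and these sum to `M`. -/

open Finset

lemma sum_range_add_le_sum_range {M : Type*} [AddCommMonoid M] [PartialOrder M]
    [CanonicallyOrderedAdd M] (u : ℕ → M) {i g : ℕ} (hi : i < g) :
    ∑ j ∈ range i, u j + u i ≤ ∑ j ∈ range g, u j := by
  rw [← sum_range_succ]
  exact sum_le_sum_of_subset (range_subset_range.2 hi)

lemma div_le_mul_div_mul {M k D a : ℝ} (hM : 0 ≤ M) (hk : 0 ≤ k) (hD : 0 < D) (hDa : D ≤ a) :
    M / k ≤ a * (M / (k * D)) :=
  calc M / k ≤ a / D * (M / k) := le_mul_of_one_le_left (div_nonneg hM hk) ((one_le_div hD).2 hDa)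
    _ = a * (M / (k * D)) := by rw [mul_comm k D, ← div_div]; ring

/-- Since `S + u ≤ k`, the coefficient `(d - S) + (t - u)` is at least `d - k + t`, and
`(d - k + t) β = M / k`. -/
lemma min_stage_flow_eq {M k d t u S : ℝ} (hM : 0 ≤ M) (hk : 0 ≤ k) (hkd : k ≤ d) (ht : 0 < t)
    (hSu : S + u ≤ k) :
    min (M / k) ((d - S) * (M / (k * (d - k + t))) + (t - u) * (M / (k * (d - k + t))))
      = M / k := by
  rw [← add_mul]
  exact min_eq_left (div_le_mul_div_mul hM hk (by linarith) (by linarith))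

theorem adaptive_regenerating_correctness_general (k g : ℕ) (hk : 0 < k)
    (M : ℝ) (hM : 0 < M)
    (t d : ℕ → ℕ) (ht : ∀ i < g, 1 ≤ t i) (hd : ∀ i < g, k ≤ d i)
    (β β' : ℕ → ℝ)
    (hβ : ∀ i < g, β i = M / (k * ((d i : ℝ) - k + t i)))
    (hβ' : ∀ i < g, β' i = M / (k * ((d i : ℝ) - k + t i)))
    (u : ℕ → ℕ)
    (hsum : ∑ i ∈ Finset.range g, u i = k) :
    ∑ i ∈ Finset.range g, (u i : ℝ) *
        min (M / k) (((d i : ℝ) - ((∑ j ∈ Finset.range i, u j : ℕ) : ℝ)) * β i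
          + ((t i : ℝ) - (u i : ℝ)) * β' i) ≥ M := by
  have hk' : (0 : ℝ) < k := Nat.cast_pos.2 hk
  have stage : ∀ i ∈ range g, (u i : ℝ) *
      min (M / k) (((d i : ℝ) - ((∑ j ∈ range i, u j : ℕ) : ℝ)) * β i
        + ((t i : ℝ) - (u i : ℝ)) * β' i) = u i * (M / k) := by
    intro i hi
    rw [mem_range] at hi
    have hSu : ((∑ j ∈ range i, u j : ℕ) : ℝ) + u i ≤ k := by
      exact_mod_cast hsum ▸ sum_range_add_le_sum_range u hi
    rw [hβ i hi, hβ' i hi, min_stage_flow_eq hM.le hk'.le (by exact_mod_cast hd i hi)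
      (Nat.cast_pos.2 (ht i hi)) hSu]
  rw [sum_congr rfl stage, ← sum_mul, ← Nat.cast_sum, hsum, mul_div_cancel₀ M hk'.ne']

/-- Adaptive regenerating codes are correct (correctness part of Theorem 3). -/
theorem adaptive_regenerating_correctness (k g : ℕ) (hk : 0 < k) (hg : 0 < g)
    (M : ℝ) (hM : 0 < M)
    (t d : ℕ → ℕ) (ht : ∀ i < g, 1 ≤ t i) (hd : ∀ i < g, k ≤ d i)
    (β β' : ℕ → ℝ)
    (hβ : ∀ i < g, β i = M / (k * ((d i : ℝ) - k + t i)))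
    (hβ' : ∀ i < g, β' i = M / (k * ((d i : ℝ) - k + t i)))
    (u : ℕ → ℕ) (hu : ∀ i < g, 1 ≤ u i ∧ u i ≤ t i)
    (hsum : ∑ i ∈ Finset.range g, u i = k) :
    ∑ i ∈ Finset.range g, (u i : ℝ) *
        min (M / k) (((d i : ℝ) - ((∑ j ∈ Finset.range i, u j : ℕ) : ℝ)) * β i
          + ((t i : ℝ) - (u i : ℝ)) * β' i) ≥ M :=
  adaptive_regenerating_correctness_general k g hk M hM t d ht hd β β' hβ hβ' u hsum
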